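/- Let β ∈ ℝ^D and â ∈ ℝ^N be unit vectors and s > 0. Suppose a(t) = u(t) â and W(t) = u(t) â βᵀ evolve under the two-layer gradient flow da/dt = W(sβ − Wᵀa), dW/dt = a(sβ − Wᵀa)ᵀ (whitened data, Σ = I) with u(0) = u₀ > 0. Then u satisfies u' = u(s − u²), and c(t) := u(t)² satisfies the logistic equation c' = 2c(s − c), whose solution is c(t) = s e^{2st} / (e^{2st} − 1 + s/c₀) with c₀ = u₀²; in particular c(t) → s as t → ∞. -/

import Mathlib

/-!
Along the aligned configuration `a = u â`, `W = u â βᵀ` the flow field for `a` is the rank-one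
computation `W (sβ − Wᵀa) = u (s − u²) â`, so reading off the `â`-component gives `u' = u (s − u²)`
and hence the logistic equation `c' = 2c(s − c)` for `c = u²`. The explicit curve solves the same
equation with the same initial value, and two solutions `c, g` of it coincide because their difference
satisfies the linear equation `(c − g)' = 2(s − c − g)(c − g)`, to which Grönwall's inequality applies.
-/

open Matrix Filter Set
open scoped Matrix.Norms.L2Operator

/-- The Euclidean (ℓ²) norm of a vector in `ℝ^n`. -/
noncomputable def euclNorm {n : ℕ} (v : Fin n → ℝ) : ℝ :=
  Real.sqrt (∑ i, v i ^ 2)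

lemma dotProduct_self_eq_one_of_euclNorm_eq_one {n : ℕ} {v : Fin n → ℝ} (hv : euclNorm v = 1) :
    v ⬝ᵥ v = 1 := by
  have hsq := Real.sq_sqrt (show 0 ≤ ∑ i, v i ^ 2 by positivity)
  rw [← euclNorm, hv] at hsq
  simpa [dotProduct, sq] using hsq.symm

lemma ne_zero_of_euclNorm_eq_one {n : ℕ} {v : Fin n → ℝ} (hv : euclNorm v = 1) : v ≠ 0 := by
  rintro rfl
  simp [euclNorm] at hv

lemma rankOne_mulVec_residual {m n : Type*} [Fintype m] [Fintype n] {x : m → ℝ} {y : n → ℝ}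
    (hx : x ⬝ᵥ x = 1) (hy : y ⬝ᵥ y = 1) (u s : ℝ) :
    (u • vecMulVec x y) *ᵥ (s • y - (u • vecMulVec x y)ᵀ *ᵥ (u • x)) = (u * (s - u ^ 2)) • x := by
  simp only [transpose_smul, transpose_vecMulVec, smul_mulVec, vecMulVec_mulVec, mulVec_smul,
    dotProduct_smul, dotProduct_sub, hx, hy, op_smul_eq_smul, smul_eq_mul, smul_smul]
  congr 1
  ring

lemma HasDerivAt.of_smul_const {E : Type*} [NormedAddCommGroup E] [NormedSpace ℝ E]
    {c : ℝ → ℝ} {d t : ℝ} {v : E} (hv : v ≠ 0) (h : HasDerivAt (fun t => c t • v) (d • v) t) :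
    HasDerivAt c d t := by
  have hnorm : ‖v‖ ≠ 0 := norm_ne_zero_iff.mpr hv
  obtain ⟨φ, -, hφv⟩ := exists_dual_vector ℝ v hnorm
  have := (φ.hasFDerivAt.comp_hasDerivAt t h).mul_const ‖v‖⁻¹
  simpa [Function.comp_def, hφv, hnorm] using this

noncomputable def logisticCurve (s c₀ t : ℝ) : ℝ :=
  s * Real.exp (2 * s * t) / (Real.exp (2 * s * t) - 1 + s / c₀)

section logistic

variable {s c₀ : ℝ}

lemma logisticCurve_zero (hs : s ≠ 0) : logisticCurve s c₀ 0 = c₀ := by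
  simp [logisticCurve, hs]

lemma hasDerivAt_logisticCurve {t : ℝ} (ht : Real.exp (2 * s * t) - 1 + s / c₀ ≠ 0) :
    HasDerivAt (logisticCurve s c₀)
      (2 * logisticCurve s c₀ t * (s - logisticCurve s c₀ t)) t := by
  have hexp : HasDerivAt (fun t => Real.exp (2 * s * t)) (Real.exp (2 * s * t) * (2 * s)) t :=
    ((hasDerivAt_id t).const_mul (2 * s)).exp.congr_deriv (by simp)
  refine ((hexp.const_mul s).div ((hexp.sub_const 1).add_const (s / c₀)) ht).congr_deriv ?_
  simp only [logisticCurve]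
  generalize Real.exp (2 * s * t) = E, s / c₀ = k at ht ⊢
  field_simp

lemma tendsto_logisticCurve_atTop (hs : 0 < s) :
    Tendsto (logisticCurve s c₀) atTop (nhds s) := by
  have hinv : Tendsto (fun t => (Real.exp (2 * s * t))⁻¹) atTop (nhds 0) :=
    (Real.tendsto_exp_atTop.comp (tendsto_id.const_mul_atTop (by positivity))).inv_tendsto_atTop
  have hlim : Tendsto (fun t => s / (1 + (s / c₀ - 1) * (Real.exp (2 * s * t))⁻¹)) atTop
      (nhds s) :=
    tendsto_const_nhds.div (tendsto_const_nhds.add (hinv.const_mul (s / c₀ - 1)))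
      (by simp : (1 : ℝ) + (s / c₀ - 1) * 0 ≠ 0) |>.trans_eq (by simp)
  refine hlim.congr fun t => ?_
  simp only [logisticCurve]
  field_simp
  ring

end logistic

lemma eqOn_Ici_of_hasDerivAt_logistic {s : ℝ} {c g : ℝ → ℝ}
    (hc : ∀ t ≥ (0 : ℝ), HasDerivAt c (2 * c t * (s - c t)) t)
    (hg : ∀ t ≥ (0 : ℝ), HasDerivAt g (2 * g t * (s - g t)) t) (h0 : c 0 = g 0) :
    ∀ t ≥ (0 : ℝ), c t = g t := by
  intro T hT
  have hdiff : ∀ t ≥ (0 : ℝ),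
      HasDerivAt (fun t => c t - g t) ((2 * s - 2 * (c t + g t)) * (c t - g t)) t :=
    fun t ht => ((hc t ht).sub (hg t ht)).congr_deriv (by ring)
  have hrate : ContinuousOn (fun t => 2 * s - 2 * (c t + g t)) (Icc 0 T) := fun t ht =>
    (continuousAt_const.sub (continuousAt_const.mul
      ((hc t ht.1).continuousAt.add (hg t ht.1).continuousAt))).continuousWithinAt
  obtain ⟨K, hK⟩ := isCompact_Icc.exists_bound_of_continuousOn hrate
  have hzero := eq_zero_of_abs_deriv_le_mul_abs_self_of_eq_zero_right (K := K)
    (fun t ht => (hdiff t ht.1).continuousAt.continuousWithinAt)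
    (fun t ht => (hdiff t ht.1).hasDerivWithinAt) (sub_eq_zero.mpr h0)
    (fun t ht => (norm_mul _ _).trans_le <|
      mul_le_mul_of_nonneg_right (hK t (Ico_subset_Icc_self ht)) (norm_nonneg _))
    T ⟨hT, le_rfl⟩
  exact sub_eq_zero.mp hzero

theorem stmt12_general {N D : ℕ} (β : Fin D → ℝ) (hβ : euclNorm β = 1)
    (ahat : Fin N → ℝ) (hahat : euclNorm ahat = 1)
    (s : ℝ) (hs : 0 < s)
    (u : ℝ → ℝ) (u₀ : ℝ) (hu0 : u 0 = u₀) (hu₀pos : 0 < u₀)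
    (a : ℝ → Fin N → ℝ) (W : ℝ → Matrix (Fin N) (Fin D) ℝ)
    (ha : ∀ t, a t = u t • ahat)
    (hW : ∀ t, W t = u t • vecMulVec ahat β)
    (hflowa : ∀ t ≥ (0 : ℝ), HasDerivAt a (W t *ᵥ (s • β - (W t)ᵀ *ᵥ a t)) t) :
    (∀ t ≥ (0 : ℝ), HasDerivAt u (u t * (s - u t ^ 2)) t) ∧
    (∀ t ≥ (0 : ℝ), HasDerivAt (fun t => u t ^ 2) (2 * u t ^ 2 * (s - u t ^ 2)) t) ∧
    (∀ t ≥ (0 : ℝ), u t ^ 2 =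
      s * Real.exp (2 * s * t) / (Real.exp (2 * s * t) - 1 + s / u₀ ^ 2)) ∧
    Tendsto (fun t => u t ^ 2) atTop (nhds s) := by
  have hu : ∀ t ≥ (0 : ℝ), HasDerivAt u (u t * (s - u t ^ 2)) t := fun t ht => by
    have hflow := hflowa t ht
    rw [hW, ha, funext ha, rankOne_mulVec_residual (dotProduct_self_eq_one_of_euclNorm_eq_one hahat)
      (dotProduct_self_eq_one_of_euclNorm_eq_one hβ)] at hflow
    exact hflow.of_smul_const (ne_zero_of_euclNorm_eq_one hahat)
  have hsq : ∀ t ≥ (0 : ℝ), HasDerivAt (fun t => u t ^ 2) (2 * u t ^ 2 * (s - u t ^ 2)) t :=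
    fun t ht => ((hu t ht).pow 2).congr_deriv (by ring)
  have hcurve : ∀ t ≥ (0 : ℝ), HasDerivAt (logisticCurve s (u₀ ^ 2))
      (2 * logisticCurve s (u₀ ^ 2) t * (s - logisticCurve s (u₀ ^ 2) t)) t := fun t ht =>
    hasDerivAt_logisticCurve (by
      have hexp : 1 ≤ Real.exp (2 * s * t) := Real.one_le_exp (by positivity)
      have hk : 0 < s / u₀ ^ 2 := by positivity
      linarith)
  have hsol := eqOn_Ici_of_hasDerivAt_logistic hsq hcurve (by rw [logisticCurve_zero hs.ne', hu0])
  refine ⟨hu, hsq, hsol, ?_⟩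
  exact (tendsto_logisticCurve_atTop hs).congr' <|
    (eventually_ge_atTop 0).mono fun t ht => (hsol t ht).symm

/-- In Phase II of a two-layer linear network with whitened data (`Σ = I`),
if `a(t) = u(t) â` and `W(t) = u(t) â βᵀ` (with `â, β` unit vectors) evolve under the
gradient flow `da/dt = W(sβ − Wᵀa)`, `dW/dt = a(sβ − Wᵀa)ᵀ`, with `u(0) = u₀ > 0`, then `u`
satisfies `u' = u(s − u²)`, `c := u²` satisfies the logistic equation `c' = 2c(s − c)` whose
solution is `c(t) = s e^{2st}/(e^{2st} − 1 + s/c₀)` with `c₀ = u₀²`, and `c(t) → s`. -/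
theorem stmt12 {N D : ℕ} (β : Fin D → ℝ) (hβ : euclNorm β = 1)
    (ahat : Fin N → ℝ) (hahat : euclNorm ahat = 1)
    (s : ℝ) (hs : 0 < s)
    (u : ℝ → ℝ) (u₀ : ℝ) (hu0 : u 0 = u₀) (hu₀pos : 0 < u₀)
    (a : ℝ → Fin N → ℝ) (W : ℝ → Matrix (Fin N) (Fin D) ℝ)
    (ha : ∀ t, a t = u t • ahat)
    (hW : ∀ t, W t = u t • vecMulVec ahat β)
    (hflowa : ∀ t ≥ (0 : ℝ), HasDerivAt a (W t *ᵥ (s • β - (W t)ᵀ *ᵥ a t)) t)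
    (hflowW : ∀ t ≥ (0 : ℝ), HasDerivAt W (vecMulVec (a t) (s • β - (W t)ᵀ *ᵥ a t)) t) :
    (∀ t ≥ (0 : ℝ), HasDerivAt u (u t * (s - u t ^ 2)) t) ∧
    (∀ t ≥ (0 : ℝ), HasDerivAt (fun t => u t ^ 2) (2 * u t ^ 2 * (s - u t ^ 2)) t) ∧
    (∀ t ≥ (0 : ℝ), u t ^ 2 =
      s * Real.exp (2 * s * t) / (Real.exp (2 * s * t) - 1 + s / u₀ ^ 2)) ∧
    Tendsto (fun t => u t ^ 2) atTop (nhds s) :=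
  stmt12_general β hβ ahat hahat s hs u u₀ hu0 hu₀pos a W ha hW hflowa
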